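/- arXiv:2005.11018 — 3 statements merged into one kernel-verified Lean document; each statement's English description precedes it below -/
import Mathlib

section
/- Let w* ∈ 𝒟 be a minimizer over 𝒟 of w ↦ E_{Z∼μ}[ℓ(w,Z)], and set g(w,z) = exp(−β ℓ(w,z)). Then for every w′ ∈ 𝒟 one has E_{Z∼μ}[ g(w′,Z) / g(w*,Z) ] ≤ 1. -/
open MeasureTheory Real

set_option maxHeartbeats 1000000

private lemma aux_log (x : ℝ) (hx : |x| ≤ 1/2) : x - 2*x^2 ≤ Real.log (1+x) := by
  obtain ⟨hx1, hx2⟩ := abs_le.1 hx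
  have h0 : (0:ℝ) < 1 + x := by linarith
  have h1 : Real.log (1+x)⁻¹ ≤ (1+x)⁻¹ - 1 := Real.log_le_sub_one_of_pos (by positivity)
  rw [Real.log_inv] at h1
  have h2 : 1 - (1+x)⁻¹ ≤ Real.log (1+x) := by linarith
  have h3 : x - 2*x^2 ≤ x / (1+x) := by
    rw [le_div_iff₀ h0]; nlinarith
  have h4 : x / (1+x) = 1 - (1+x)⁻¹ := by field_simp; ring
  linarith [h4 ▸ h3]

/-- Let `𝒟` be a convex subset of a real vector space, `(Ω, μ)` a
probability space, `β > 0`, and `ℓ : 𝒟 × Ω → ℝ` bounded, measurable in the second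
argument, with `w ↦ exp(−β ℓ(w,z))` concave on `𝒟` for every `z`.  If `w*` minimizes
`w ↦ E_{Z∼μ}[ℓ(w,Z)]` over `𝒟` and `g(w,z) = exp(−β ℓ(w,z))`, then for every `w′ ∈ 𝒟`,
`E_{Z∼μ}[ g(w′,Z) / g(w*,Z) ] ≤ 1`. -/
theorem stmt0
    {V : Type*} [AddCommGroup V] [Module ℝ V]
    {Ω : Type*} [MeasurableSpace Ω] (μ : Measure Ω) [IsProbabilityMeasure μ]
    (D : Set V) (hD : Convex ℝ D)
    (β : ℝ) (hβ : 0 < β)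
    (ℓ : V → Ω → ℝ)
    (hbdd : ∃ C : ℝ, ∀ w ∈ D, ∀ z, |ℓ w z| ≤ C)
    (hmeas : ∀ w ∈ D, Measurable fun z => ℓ w z)
    (hconc : ∀ z, ConcaveOn ℝ D fun w => Real.exp (-β * ℓ w z))
    (wstar : V) (hwstar : wstar ∈ D)
    (hmin : ∀ w ∈ D, (∫ z, ℓ wstar z ∂μ) ≤ ∫ z, ℓ w z ∂μ) :
    ∀ w' ∈ D,
      (∫ z, Real.exp (-β * ℓ w' z) / Real.exp (-β * ℓ wstar z) ∂μ) ≤ 1 := by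
  intro w' hw'
  obtain ⟨C₀, hC₀⟩ := hbdd
  set C : ℝ := max C₀ 0 with hCdef
  have hC : ∀ w ∈ D, ∀ z, |ℓ w z| ≤ C := fun w hw z => (hC₀ w hw z).trans (le_max_left _ _)
  have hCnn : 0 ≤ C := le_max_right _ _
  -- the ratio function
  set r : Ω → ℝ := fun z => Real.exp (-β * ℓ w' z - -β * ℓ wstar z) with hrdef
  have hrpos : ∀ z, 0 < r z := fun z => Real.exp_pos _
  set M : ℝ := Real.exp (2 * β * C) with hMdef
  have hM1 : (1:ℝ) ≤ M := by
    rw [hMdef, show (1:ℝ) = Real.exp 0 by simp]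
    exact Real.exp_le_exp.2 (by positivity)
  have hrM : ∀ z, r z ≤ M := by
    intro z
    rw [hrdef, hMdef]
    apply Real.exp_le_exp.2
    have h1 := abs_le.1 (hC w' hw' z)
    have h2 := abs_le.1 (hC wstar hwstar z)
    nlinarith [h1.1, h1.2, h2.1, h2.2, hβ.le]
  have hrm : ∀ z, Real.exp (-(2 * β * C)) ≤ r z := by
    intro z
    rw [hrdef]
    apply Real.exp_le_exp.2
    have h1 := abs_le.1 (hC w' hw' z)
    have h2 := abs_le.1 (hC wstar hwstar z)
    nlinarith [h1.1, h1.2, h2.1, h2.2, hβ.le]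
  set K : ℝ := M + 1 with hKdef
  have hK1 : (2:ℝ) ≤ K := by linarith
  have hKpos : (0:ℝ) < K := by linarith
  have hrK : ∀ z, |r z - 1| ≤ K := by
    intro z
    rw [abs_le]
    refine ⟨by nlinarith [hrpos z], by nlinarith [hrM z]⟩
  -- measurability of r
  have hrmeas : Measurable r := by
    apply Measurable.exp
    exact ((hmeas w' hw').const_mul (-β)).sub ((hmeas wstar hwstar).const_mul (-β))
  -- integrability helper
  have integ : ∀ (f : Ω → ℝ) (B : ℝ), Measurable f → (∀ z, |f z| ≤ B) → Integrable f μ := by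
    intro f B hf hB
    exact ⟨hf.aestronglyMeasurable,
      HasFiniteIntegral.of_bounded (C := B) (ae_of_all _ (by simpa [Real.norm_eq_abs] using hB))⟩
  have hr_int : Integrable r μ := integ r M hrmeas
    (fun z => by rw [abs_of_pos (hrpos z)]; exact hrM z)
  have hrKsq : ∀ z, (r z - 1)^2 ≤ K^2 := by
    intro z
    calc (r z - 1)^2 = |r z - 1|^2 := (sq_abs _).symm
      _ ≤ K^2 := pow_le_pow_left₀ (abs_nonneg _) (hrK z) 2
  have hrsq_int : Integrable (fun z => (r z - 1)^2) μ := by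
    apply integ _ (K^2) ((hrmeas.sub measurable_const).pow measurable_const)
    intro z
    rw [abs_of_nonneg (sq_nonneg _)]
    exact hrKsq z
  have hrsub_int : Integrable (fun z => r z - 1) μ := hr_int.sub (integrable_const 1)
  set A : ℝ := ∫ z, r z ∂μ with hAdef
  set B : ℝ := ∫ z, (r z - 1)^2 ∂μ with hBdef
  have hBnn : 0 ≤ B := integral_nonneg (fun z => sq_nonneg _)
  have hBK : B ≤ K^2 := by
    calc B ≤ ∫ _z, K^2 ∂μ := integral_mono hrsq_int (integrable_const _) (fun z => hrKsq z)
      _ = K^2 := by simp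
  -- Key step: for each small positive t, A - 1 ≤ 2 * t * B
  have key : ∀ t : ℝ, 0 < t → t ≤ 1 → t * K ≤ 1/2 → A - 1 ≤ 2 * t * B := by
    intro t ht ht1 htK
    set w : V := (1 - t) • wstar + t • w' with hwdef
    have hwD : w ∈ D := hD hwstar hw' (by linarith) ht.le (by ring)
    -- concavity pointwise
    have hpt : ∀ z, ℓ w z ≤ ℓ wstar z - (1/β) * Real.log (1 - t + t * r z) := by
      intro z
      have hcc := (hconc z).2 hwstar hw' (by linarith : (0:ℝ) ≤ 1 - t) ht.le (by ring)
      simp only [smul_eq_mul] at hcc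
      have hrz : r z = Real.exp (-β * ℓ w' z) / Real.exp (-β * ℓ wstar z) :=
        Real.exp_sub _ _
      have hfac : (1 - t) * Real.exp (-β * ℓ wstar z) + t * Real.exp (-β * ℓ w' z)
          = Real.exp (-β * ℓ wstar z) * (1 - t + t * r z) := by
        rw [hrz]; field_simp
      have hcomb_pos : 0 < 1 - t + t * r z := by nlinarith [hrpos z]
      have hlog : Real.log (Real.exp (-β * ℓ wstar z) * (1 - t + t * r z))
          ≤ -β * ℓ w z := by
        calc Real.log (Real.exp (-β * ℓ wstar z) * (1 - t + t * r z))
            ≤ Real.log (Real.exp (-β * ℓ w z)) := by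
              apply Real.log_le_log (by positivity)
              rw [← hfac]; exact hcc
          _ = -β * ℓ w z := Real.log_exp _
      rw [Real.log_mul (Real.exp_ne_zero _) (ne_of_gt hcomb_pos), Real.log_exp] at hlog
      -- hlog : -β * ℓ wstar z + log (1 - t + t * r z) ≤ -β * ℓ w z
      have hmul : β * ℓ w z ≤ β * (ℓ wstar z - 1/β * Real.log (1 - t + t * r z)) := by
        have heq : β * (ℓ wstar z - 1/β * Real.log (1 - t + t * r z))
            = β * ℓ wstar z - Real.log (1 - t + t * r z) := by
          field_simp
        rw [heq]; linarith
      exact le_of_mul_le_mul_left hmul hβ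
    -- boundedness / integrability of the log term
    have hlogb : ∀ z, |Real.log (1 - t + t * r z)| ≤ 2 * β * C := by
      intro z
      have hm := hrm z
      have hM' := hrM z
      have h1 : 1 - t + t * r z ≤ M := by nlinarith
      have h2 : Real.exp (-(2 * β * C)) ≤ 1 - t + t * r z := by
        have : Real.exp (-(2 * β * C)) ≤ 1 := by
          rw [show (1:ℝ) = Real.exp 0 by simp]
          exact Real.exp_le_exp.2 (by nlinarith)
        nlinarith
      rw [abs_le]
      constructor
      · calc -(2 * β * C) = Real.log (Real.exp (-(2 * β * C))) := (Real.log_exp _).symm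
          _ ≤ Real.log (1 - t + t * r z) := Real.log_le_log (Real.exp_pos _) h2
      · calc Real.log (1 - t + t * r z) ≤ Real.log M :=
              Real.log_le_log (lt_of_lt_of_le (Real.exp_pos _) h2) h1
          _ = 2 * β * C := by rw [hMdef, Real.log_exp]
    have hlogmeas : Measurable fun z => Real.log (1 - t + t * r z) :=
      ((hrmeas.const_mul t).const_add (1 - t)).log
    have hlog_int : Integrable (fun z => Real.log (1 - t + t * r z)) μ :=
      integ _ (2 * β * C) hlogmeas hlogb
    have hw_int : Integrable (fun z => ℓ w z) μ := integ _ C (hmeas w hwD) (hC w hwD)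
    have hws_int : Integrable (fun z => ℓ wstar z) μ :=
      integ _ C (hmeas wstar hwstar) (hC wstar hwstar)
    -- integrate the pointwise inequality
    have hint1 : (∫ z, ℓ w z ∂μ) ≤ ∫ z, (ℓ wstar z - (1/β) * Real.log (1 - t + t * r z)) ∂μ :=
      integral_mono hw_int (hws_int.sub (hlog_int.const_mul _)) hpt
    rw [integral_sub hws_int (hlog_int.const_mul _), integral_const_mul] at hint1
    have hmin' := hmin w hwD
    have hlogint_le : (∫ z, Real.log (1 - t + t * r z) ∂μ) ≤ 0 := by
      by_contra hcon
      push_neg at hcon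
      have hβ' : (0:ℝ) < 1/β := by positivity
      nlinarith [hint1, hmin']
    -- lower bound the log pointwise
    have hpt2 : ∀ z, t * (r z - 1) - 2 * (t * (r z - 1))^2 ≤ Real.log (1 - t + t * r z) := by
      intro z
      have hx : |t * (r z - 1)| ≤ 1/2 := by
        rw [abs_mul, abs_of_pos ht]
        calc t * |r z - 1| ≤ t * K := mul_le_mul_of_nonneg_left (hrK z) ht.le
          _ ≤ 1/2 := htK
      have h := aux_log (t * (r z - 1)) hx
      have heq : 1 + t * (r z - 1) = 1 - t + t * r z := by ring
      rw [heq] at h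
      exact h
    have hlhs_int : Integrable (fun z => t * (r z - 1) - 2 * (t * (r z - 1))^2) μ := by
      apply Integrable.sub (hrsub_int.const_mul t)
      have heq : (fun z => 2 * (t * (r z - 1))^2) = fun z => (2 * t^2) * (r z - 1)^2 := by
        funext z; ring
      rw [heq]
      exact hrsq_int.const_mul _
    have hint2 : (∫ z, (t * (r z - 1) - 2 * (t * (r z - 1))^2) ∂μ)
        ≤ ∫ z, Real.log (1 - t + t * r z) ∂μ :=
      integral_mono hlhs_int hlog_int hpt2
    have hcalc : (∫ z, (t * (r z - 1) - 2 * (t * (r z - 1))^2) ∂μ)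
        = t * (A - 1) - 2 * t^2 * B := by
      have h1 : (fun z => t * (r z - 1) - 2 * (t * (r z - 1))^2)
          = fun z => t * (r z - 1) - (2 * t^2) * (r z - 1)^2 := by
        funext z; ring
      rw [h1, integral_sub (hrsub_int.const_mul t) (hrsq_int.const_mul _),
        integral_const_mul, integral_const_mul,
        integral_sub hr_int (integrable_const 1)]
      simp
      rfl
    rw [hcalc] at hint2
    have h2 : t * (A - 1) ≤ t * (2 * t * B) := by nlinarith
    exact le_of_mul_le_mul_left h2 ht
  -- conclude A ≤ 1 by letting t → 0
  have hA1 : A ≤ 1 := by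
    apply le_of_forall_pos_le_add
    intro ε hεpos
    set t : ℝ := min (ε / (4 * K^2)) (1 / (2 * K)) with htdef
    have ht1 : 0 < t := lt_min (by positivity) (by positivity)
    have ht2 : t ≤ 1 := by
      refine le_trans (min_le_right _ _) ?_
      rw [div_le_one (by positivity)]
      linarith
    have ht3 : t * K ≤ 1/2 := by
      have h := min_le_right (ε / (4 * K^2)) (1 / (2 * K))
      calc t * K ≤ (1 / (2 * K)) * K := mul_le_mul_of_nonneg_right h hKpos.le
        _ = 1/2 := by field_simp
    have hkey := key t ht1 ht2 ht3
    have ht4 : t ≤ ε / (4 * K^2) := min_le_left _ _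
    have hfin : 2 * t * B ≤ 2 * (ε / (4 * K^2)) * K^2 := by
      apply mul_le_mul
      · exact mul_le_mul_of_nonneg_left ht4 (by norm_num)
      · exact hBK
      · exact hBnn
      · positivity
    have heq : 2 * (ε / (4 * K^2)) * K^2 = ε / 2 := by
      field_simp; ring
    linarith
  -- rewrite the goal in terms of r
  refine le_trans (le_of_eq ?_) hA1
  apply integral_congr_ae
  filter_upwards with z
  exact (Real.exp_sub _ _).symm
end

section
/- Suppose ŵ ∈ 𝒟 minimizes w ↦ E_{Y∼Q}[ℓ(w,Y)] over 𝒟. Then for every w ∈ 𝒟, E_{Y∼p}[ℓ(ŵ,Y)] − E_{Y∼p}[ℓ(w,Y)] ≤ (1/β) D(p‖Q), where D(p‖Q) = Σ_{y∈𝒴} p(y) log( p(y)/Q(y) ) is the Kullback–Leibler divergence. -/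
open Real

/-- Let `𝒴` be a finite set, `𝒟` a convex subset of a real vector
space, `β > 0`, and `ℓ : 𝒟 × 𝒴 → ℝ` bounded with `w ↦ exp(−β ℓ(w,y))` concave on `𝒟`
for every `y`.  Let `p, Q` be probability distributions on `𝒴` with `Q(y) > 0`.
If `ŵ ∈ 𝒟` minimizes `w ↦ E_{Y∼Q}[ℓ(w,Y)]` over `𝒟`, then for every `w ∈ 𝒟`,
`E_{Y∼p}[ℓ(ŵ,Y)] − E_{Y∼p}[ℓ(w,Y)] ≤ (1/β) D(p‖Q)`. -/
theorem stmt1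
    {Y : Type*} [Fintype Y]
    {V : Type*} [AddCommGroup V] [Module ℝ V]
    (D : Set V) (hD : Convex ℝ D)
    (β : ℝ) (hβ : 0 < β)
    (ℓ : V → Y → ℝ)
    (hbdd : ∃ C : ℝ, ∀ w ∈ D, ∀ y, |ℓ w y| ≤ C)
    (hconc : ∀ y, ConcaveOn ℝ D fun w => Real.exp (-β * ℓ w y))
    (p Q : Y → ℝ)
    (hp0 : ∀ y, 0 ≤ p y) (hp1 : ∑ y, p y = 1)
    (hQ0 : ∀ y, 0 < Q y) (hQ1 : ∑ y, Q y = 1)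
    (what : V) (hhat : what ∈ D)
    (hmin : ∀ w ∈ D, (∑ y, Q y * ℓ what y) ≤ ∑ y, Q y * ℓ w y) :
    ∀ w ∈ D,
      (∑ y, p y * ℓ what y) - (∑ y, p y * ℓ w y) ≤
        (1 / β) * ∑ y, p y * Real.log (p y / Q y) := by
  intro w hw
  set r : Y → ℝ := fun y => Real.exp (β * (ℓ what y - ℓ w y)) with hrdef
  have hrpos : ∀ y, 0 < r y := fun y => Real.exp_pos _
  have hmulr : ∀ y, Real.exp (-β * ℓ what y) * r y = Real.exp (-β * ℓ w y) := by
    intro y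
    rw [hrdef, ← Real.exp_add]
    congr 1
    ring
  -- Step 1: for every λ ∈ (0,1], ∑ Q y log(1+λ(r y −1)) ≤ 0
  have key : ∀ lam : ℝ, 0 < lam → lam ≤ 1 →
      (∑ y, Q y * Real.log (1 + lam * (r y - 1))) ≤ 0 := by
    intro lam hl0 hl1
    have hpos : ∀ y, 0 < 1 + lam * (r y - 1) := by
      intro y
      have h1 : 1 + lam * (r y - 1) = (1 - lam) + lam * r y := by ring
      have h2 : 0 < lam * r y := mul_pos hl0 (hrpos y)
      rw [h1]; nlinarith
    set wl := (1 - lam) • what + lam • w with hwl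
    have hwlD : wl ∈ D := hD hhat hw (by linarith) hl0.le (by ring)
    have hle : ∀ y, Real.log (1 + lam * (r y - 1)) ≤ β * (ℓ what y - ℓ wl y) := by
      intro y
      have hc := (hconc y).2 hhat hw (by linarith : (0:ℝ) ≤ 1 - lam) hl0.le (by ring)
      simp only [smul_eq_mul] at hc
      have hrw : (1 - lam) * Real.exp (-β * ℓ what y) + lam * Real.exp (-β * ℓ w y)
          = Real.exp (-β * ℓ what y) * (1 + lam * (r y - 1)) := by
        rw [← hmulr y]; ring
      rw [hrw] at hc
      have hlog : Real.log (Real.exp (-β * ℓ what y) * (1 + lam * (r y - 1)))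
          ≤ Real.log (Real.exp (-β * ℓ wl y)) :=
        Real.log_le_log (mul_pos (Real.exp_pos _) (hpos y)) hc
      rw [Real.log_mul (Real.exp_ne_zero _) (hpos y).ne', Real.log_exp, Real.log_exp] at hlog
      linarith
    have hsum : (∑ y, Q y * Real.log (1 + lam * (r y - 1)))
        ≤ ∑ y, Q y * (β * (ℓ what y - ℓ wl y)) :=
      Finset.sum_le_sum fun y _ => mul_le_mul_of_nonneg_left (hle y) (hQ0 y).le
    have heq : (∑ y, Q y * (β * (ℓ what y - ℓ wl y)))
        = β * ((∑ y, Q y * ℓ what y) - ∑ y, Q y * ℓ wl y) := by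
      rw [← Finset.sum_sub_distrib, Finset.mul_sum]
      exact Finset.sum_congr rfl fun y _ => by ring
    have hm := hmin wl hwlD
    have : (∑ y, Q y * (β * (ℓ what y - ℓ wl y))) ≤ 0 := by
      rw [heq]
      nlinarith
    linarith
  -- Step 2: take the limit λ → 0⁺ to get ∑ Q y * r y ≤ 1
  have hQr : (∑ y, Q y * r y) ≤ 1 := by
    set F : ℝ → ℝ := fun t => ∑ y, Q y * Real.log (1 + t * (r y - 1)) with hF
    set c : ℝ := ∑ y, Q y * (r y - 1) with hc
    have hder : HasDerivAt F c 0 := by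
      apply HasDerivAt.fun_sum
      intro y _
      have h1 : HasDerivAt (fun t : ℝ => 1 + t * (r y - 1)) (r y - 1) 0 :=
        (hasDerivAt_mul_const (r y - 1)).const_add 1
      have h2 : HasDerivAt (fun t : ℝ => Real.log (1 + t * (r y - 1))) (r y - 1) 0 := by
        have := h1.log (by norm_num : (1:ℝ) + 0 * (r y - 1) ≠ 0)
        simpa using this
      exact h2.const_mul (Q y)
    rw [hasDerivAt_iff_tendsto_slope] at hder
    have hF0 : F 0 = 0 := by simp [hF]
    have htend : Filter.Tendsto (slope F 0) (nhdsWithin 0 (Set.Ioi 0)) (nhds c) :=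
      hder.mono_left (nhdsWithin_mono 0 fun x hx => ne_of_gt hx)
    have hev : ∀ᶠ t in nhdsWithin (0:ℝ) (Set.Ioi 0), slope F 0 t ≤ 0 := by
      filter_upwards [Ioo_mem_nhdsGT_of_mem (Set.mem_Ico.mpr ⟨le_refl 0, zero_lt_one⟩)]
        with t ht
      have ht0 : 0 < t := ht.1
      have ht1 : t ≤ 1 := ht.2.le
      have hFt : F t ≤ 0 := key t ht0 ht1
      have hsl : slope F 0 t = F t / t := by
        simp [slope_def_field, hF0]
      rw [hsl]
      exact div_nonpos_of_nonpos_of_nonneg hFt ht0.le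
    have hcle : c ≤ 0 := le_of_tendsto htend hev
    have : c = (∑ y, Q y * r y) - 1 := by
      rw [hc]
      simp only [mul_sub, mul_one]
      rw [Finset.sum_sub_distrib, hQ1]
    linarith
  -- Step 3: pointwise log x ≤ x − 1 argument
  have hterm : ∀ y, p y * (β * (ℓ what y - ℓ w y)) - p y * Real.log (p y / Q y)
      ≤ Q y * r y - p y := by
    intro y
    rcases eq_or_lt_of_le (hp0 y) with h0 | h0
    · rw [← h0]
      have : 0 ≤ Q y * r y := le_of_lt (mul_pos (hQ0 y) (hrpos y))
      simpa using this
    · have hQ := hQ0 y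
      have hr' := hrpos y
      have h1 : p y * (β * (ℓ what y - ℓ w y)) - p y * Real.log (p y / Q y)
          = p y * Real.log (Q y * r y / p y) := by
        have hlr : Real.log (r y) = β * (ℓ what y - ℓ w y) := Real.log_exp _
        rw [← hlr, Real.log_div (by positivity) h0.ne', Real.log_mul hQ.ne' hr'.ne',
          Real.log_div h0.ne' hQ.ne']
        ring
      rw [h1]
      have hlog := Real.log_le_sub_one_of_pos (show 0 < Q y * r y / p y by positivity)
      calc p y * Real.log (Q y * r y / p y) ≤ p y * (Q y * r y / p y - 1) :=
            mul_le_mul_of_nonneg_left hlog h0.le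
        _ = Q y * r y - p y := by field_simp
  have hsum2 : (∑ y, (p y * (β * (ℓ what y - ℓ w y)) - p y * Real.log (p y / Q y)))
      ≤ ∑ y, (Q y * r y - p y) := Finset.sum_le_sum fun y _ => hterm y
  have e1 : (∑ y, (p y * (β * (ℓ what y - ℓ w y)) - p y * Real.log (p y / Q y)))
      = β * ((∑ y, p y * ℓ what y) - ∑ y, p y * ℓ w y)
        - ∑ y, p y * Real.log (p y / Q y) := by
    rw [Finset.sum_sub_distrib]
    congr 1
    rw [← Finset.sum_sub_distrib, Finset.mul_sum]
    exact Finset.sum_congr rfl fun y _ => by ring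
  have e2 : (∑ y, (Q y * r y - p y)) = (∑ y, Q y * r y) - 1 := by
    rw [Finset.sum_sub_distrib, hp1]
  rw [e1, e2] at hsum2
  have hfin : β * ((∑ y, p y * ℓ what y) - ∑ y, p y * ℓ w y)
      ≤ ∑ y, p y * Real.log (p y / Q y) := by linarith
  rw [mul_comm, ← div_eq_mul_one_div, le_div_iff₀ hβ]
  linarith [hfin, mul_comm β ((∑ y, p y * ℓ what y) - ∑ y, p y * ℓ w y)]
end

section
/- Then 0 < K1 ≤ K2 ≤ K3, where K1 = (1/β)( Tr((A + αB)^{-1} A) − Tr((A + αB)^{-1} B) ), K2 = (1/β)( d − Tr(A^{-1} B) ), and K3 = (1/β)( Tr(B^{-1} A) − d ). -/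
open Matrix

section Aux

variable {d : ℕ}

open scoped MatrixOrder

private lemma herm_transpose_eq {P : Matrix (Fin d) (Fin d) ℝ} (hP : P.IsHermitian) :
    Pᵀ = P := by
  ext i j
  simpa using congrFun (congrFun hP.eq i) j

private lemma dot_swap {P : Matrix (Fin d) (Fin d) ℝ} (hP : P.IsHermitian)
    (a b : Fin d → ℝ) : a ⬝ᵥ (P *ᵥ b) = (P *ᵥ a) ⬝ᵥ b := by
  rw [dotProduct_mulVec, ← mulVec_transpose, herm_transpose_eq hP]

private lemma smul_posSemidef' {α : ℝ} (hα : 0 ≤ α) {B : Matrix (Fin d) (Fin d) ℝ}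
    (hB : B.PosSemidef) : (α • B).PosSemidef := by
  refine ⟨?_, fun x => ?_⟩
  · unfold Matrix.IsHermitian
    rw [conjTranspose_smul, star_trivial, hB.isHermitian.eq]
  · exact (hB.smul hα).2 x

private lemma trace_psd_nonneg {M : Matrix (Fin d) (Fin d) ℝ} (hM : M.PosSemidef) :
    0 ≤ M.trace := by
  refine Finset.sum_nonneg fun i _ => ?_
  simpa using hM.dotProduct_mulVec_nonneg (Pi.single i 1)

private lemma trace_pd_pos (hd : 1 ≤ d) {M : Matrix (Fin d) (Fin d) ℝ} (hM : M.PosDef) :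
    0 < M.trace := by
  have : Nonempty (Fin d) := ⟨⟨0, hd⟩⟩
  refine Finset.sum_pos (fun i _ => ?_) Finset.univ_nonempty
  have hs : (Pi.single i 1 : Fin d → ℝ) ≠ 0 := by
    intro h
    have := congrFun h i
    simp at this
  simpa using hM.dotProduct_mulVec_pos hs

private lemma trace_mul_psd_nonneg {M N : Matrix (Fin d) (Fin d) ℝ}
    (hM : M.PosSemidef) (hN : N.PosSemidef) : 0 ≤ (M * N).trace := by
  obtain ⟨C, rfl⟩ := CStarAlgebra.nonneg_iff_eq_star_mul_self.mp (nonneg_iff_posSemidef.mpr hN)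
  rw [star_eq_conjTranspose, ← mul_assoc, trace_mul_comm, ← mul_assoc]
  exact trace_psd_nonneg (hM.mul_mul_conjTranspose_same C)

private lemma posDef_conj {M R : Matrix (Fin d) (Fin d) ℝ} (hM : M.PosDef)
    (hR : IsUnit R.det) : (R * M * Rᵀ).PosDef := by
  have hRT : IsUnit Rᵀ.det := by rwa [Matrix.det_transpose]
  refine PosDef.of_dotProduct_mulVec_pos ?_ (fun x hx => ?_)
  · have := (hM.posSemidef.mul_mul_conjTranspose_same R).isHermitian
    simpa using this
  · have hy : Rᵀ *ᵥ x ≠ 0 := by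
      have hinj : Function.Injective (Rᵀ).mulVec :=
        Matrix.mulVec_injective_iff_isUnit.mpr ((Matrix.isUnit_iff_isUnit_det _).mpr hRT)
      exact (hinj.ne_iff' (Matrix.mulVec_zero _)).2 hx
    have h := hM.dotProduct_mulVec_pos hy
    simp only [star_trivial] at h ⊢
    rw [mul_assoc, ← mulVec_mulVec, ← mulVec_mulVec, dotProduct_mulVec, ← mulVec_transpose]
    exact h

private lemma trace_mul_pd_pos (hd : 1 ≤ d) {M N : Matrix (Fin d) (Fin d) ℝ}
    (hM : M.PosDef) (hN : N.PosDef) : 0 < (M * N).trace := by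
  set R := CFC.sqrt N with hR
  have hRsymm : Rᵀ = R := herm_transpose_eq (nonneg_iff_posSemidef.mp (CFC.sqrt_nonneg N)).isHermitian
  have hNR : R * R = N := CFC.sqrt_mul_sqrt_self N (nonneg_iff_posSemidef.mpr hN.posSemidef)
  have hRdet : IsUnit R.det := by
    have hdet : R.det * R.det = N.det := by rw [← det_mul, hNR]
    have hNdet := hN.det_pos
    have hne : R.det ≠ 0 := by
      intro h
      rw [h, mul_zero] at hdet
      exact hNdet.ne (by rw [← hdet])
    exact hne.isUnit
  have htr : (M * N).trace = (R * M * Rᵀ).trace := by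
    rw [hRsymm, ← hNR, ← mul_assoc, Matrix.trace_mul_cycle]
  rw [htr]
  exact trace_pd_pos hd (posDef_conj hM hRdet)

private lemma inv_sub_inv_psd {M S : Matrix (Fin d) (Fin d) ℝ} (hM : M.PosDef)
    (hS : S.PosSemidef) : (M⁻¹ - (M + S)⁻¹).PosSemidef := by
  have hN : (M + S).PosDef := hM.add_posSemidef hS
  have hMdet : IsUnit M.det := hM.det_pos.ne'.isUnit
  have hNdet : IsUnit (M + S).det := hN.det_pos.ne'.isUnit
  refine PosSemidef.of_dotProduct_mulVec_nonneg (hM.inv.isHermitian.sub hN.inv.isHermitian) (fun x => ?_)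
  simp only [star_trivial, sub_mulVec, dotProduct_sub]
  set u := M⁻¹ *ᵥ x with hu
  set v := (M + S)⁻¹ *ᵥ x with hv
  have hxu : M *ᵥ u = x := by
    rw [hu, mulVec_mulVec, mul_nonsing_inv _ hMdet, one_mulVec]
  have hxv : (M + S) *ᵥ v = x := by
    rw [hv, mulVec_mulVec, mul_nonsing_inv _ hNdet, one_mulVec]
  have h1 : u ⬝ᵥ (M *ᵥ u) = x ⬝ᵥ u := by rw [dot_swap hM.isHermitian, hxu]
  have h2 : u ⬝ᵥ (M *ᵥ v) = x ⬝ᵥ v := by rw [dot_swap hM.isHermitian, hxu]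
  have h3 : v ⬝ᵥ (M *ᵥ u) = x ⬝ᵥ v := by rw [hxu, dotProduct_comm]
  have h4 : v ⬝ᵥ (M *ᵥ v) + v ⬝ᵥ (S *ᵥ v) = x ⬝ᵥ v := by
    rw [← dotProduct_add, ← add_mulVec, hxv, dotProduct_comm]
  have hq1 : 0 ≤ (u - v) ⬝ᵥ (M *ᵥ (u - v)) := by
    simpa using hM.posSemidef.dotProduct_mulVec_nonneg (u - v)
  have hq2 : 0 ≤ v ⬝ᵥ (S *ᵥ v) := by simpa using hS.dotProduct_mulVec_nonneg v
  have expand : (u - v) ⬝ᵥ (M *ᵥ (u - v)) + v ⬝ᵥ (S *ᵥ v) = x ⬝ᵥ u - x ⬝ᵥ v := by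
    rw [mulVec_sub, dotProduct_sub, sub_dotProduct, sub_dotProduct, h1, h2, h3]
    linarith
  linarith

end Aux

/-- Let `d ≥ 1`, `β > 0`, `α > 0`, and let `A, B` be real symmetric
positive definite `d×d` matrices with `A − B` positive definite.  With
`K1 = (1/β)(Tr((A+αB)⁻¹A) − Tr((A+αB)⁻¹B))`, `K2 = (1/β)(d − Tr(A⁻¹B))`,
`K3 = (1/β)(Tr(B⁻¹A) − d)`, one has `0 < K1 ≤ K2 ≤ K3`. -/
theorem stmt17 {d : ℕ} (hd : 1 ≤ d) (β α : ℝ) (hβ : 0 < β) (hα : 0 < α)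
    (A B : Matrix (Fin d) (Fin d) ℝ)
    (hAsymm : A.IsSymm) (hBsymm : B.IsSymm)
    (hA : A.PosDef) (hB : B.PosDef) (hAB : (A - B).PosDef) :
    0 < (1 / β) * (((A + α • B)⁻¹ * A).trace - ((A + α • B)⁻¹ * B).trace) ∧
    (1 / β) * (((A + α • B)⁻¹ * A).trace - ((A + α • B)⁻¹ * B).trace) ≤
      (1 / β) * ((d : ℝ) - (A⁻¹ * B).trace) ∧
    (1 / β) * ((d : ℝ) - (A⁻¹ * B).trace) ≤
      (1 / β) * ((B⁻¹ * A).trace - (d : ℝ)) := by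
  have hβ' : 0 < 1 / β := by positivity
  have hαB : (α • B).PosSemidef := smul_posSemidef' hα.le hB.posSemidef
  have hP : (A + α • B).PosDef := hA.add_posSemidef hαB
  have hAdet : IsUnit A.det := hA.det_pos.ne'.isUnit
  have hBdet : IsUnit B.det := hB.det_pos.ne'.isUnit
  -- numerators as traces against C := A - B
  have e1 : ((A + α • B)⁻¹ * A).trace - ((A + α • B)⁻¹ * B).trace
      = ((A + α • B)⁻¹ * (A - B)).trace := by
    rw [mul_sub, trace_sub]
  have e2 : (d : ℝ) - (A⁻¹ * B).trace = (A⁻¹ * (A - B)).trace := by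
    rw [mul_sub, trace_sub, nonsing_inv_mul _ hAdet, trace_one]
    simp
  have e3 : (B⁻¹ * A).trace - (d : ℝ) = (B⁻¹ * (A - B)).trace := by
    rw [mul_sub, trace_sub, nonsing_inv_mul _ hBdet, trace_one]
    simp
  refine ⟨?_, ?_, ?_⟩
  · rw [e1]
    exact mul_pos hβ' (trace_mul_pd_pos hd hP.inv hAB)
  · rw [e1, e2]
    refine mul_le_mul_of_nonneg_left ?_ hβ'.le
    have hpsd : (A⁻¹ - (A + α • B)⁻¹).PosSemidef := inv_sub_inv_psd hA hαB
    have := trace_mul_psd_nonneg hpsd hAB.posSemidef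
    rw [sub_mul, trace_sub] at this
    linarith
  · rw [e2, e3]
    refine mul_le_mul_of_nonneg_left ?_ hβ'.le
    have hpsd : (B⁻¹ - A⁻¹).PosSemidef := by
      have := inv_sub_inv_psd hB hAB.posSemidef
      rwa [add_sub_cancel] at this
    have := trace_mul_psd_nonneg hpsd hAB.posSemidef
    rw [sub_mul, trace_sub] at this
    linarith
end
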